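/- arXiv:2010.13531 — 2 statements merged into one kernel-verified Lean document; each statement's English description precedes it below -/
import Mathlib

section
/- For every integer n ≥ 1 and every real θ ∈ (0,1), one has θ · Σ_{y=1}^{n} (n−1 choose y−1) · θ^{y−1} · (1−θ)^{n−y} · ln( y / (n·θ) ) ≤ (1−θ)/n. -/
/-!
Substituting `k = y - 1`, the weights are the binomial probabilities
`(bernsteinPolynomial ℝ (n-1) k).eval θ`.
Bounding `log t ≤ t - 1` termwise leaves `θ * (E[K + 1] / (nθ) - 1)` with `K ~ Bin(n-1, θ)`,
and `E[K + 1] = (n-1)θ + 1` makes this exactly `(1 - θ)/n`.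
-/

open Finset Real

theorem bernsteinPolynomial_eval (m k : ℕ) (x : ℝ) :
    (bernsteinPolynomial ℝ m k).eval x = m.choose k * x ^ k * (1 - x) ^ (m - k) := by
  simp [bernsteinPolynomial]

theorem sum_bernsteinPolynomial_eval {R : Type*} [CommRing R] (m : ℕ) (x : R) :
    ∑ k ∈ range (m + 1), (bernsteinPolynomial R m k).eval x = 1 := by
  simpa [Polynomial.eval_finsetSum] using
    congrArg (Polynomial.eval x) (bernsteinPolynomial.sum R m)

theorem sum_mul_bernsteinPolynomial_eval {R : Type*} [CommRing R] (m : ℕ) (x : R) :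
    ∑ k ∈ range (m + 1), k * (bernsteinPolynomial R m k).eval x = m * x := by
  simpa [Polynomial.eval_finsetSum] using
    congrArg (Polynomial.eval x) (bernsteinPolynomial.sum_smul R m)

theorem sum_mul_log_le_sum_mul_sub_sum {ι : Type*} (s : Finset ι) (p x : ι → ℝ)
    (hp : ∀ i ∈ s, 0 ≤ p i) (hx : ∀ i ∈ s, 0 < x i) :
    ∑ i ∈ s, p i * log (x i) ≤ ∑ i ∈ s, p i * x i - ∑ i ∈ s, p i := by
  rw [← sum_sub_distrib]
  refine sum_le_sum fun i hi => ?_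
  rw [← mul_sub_one]
  exact mul_le_mul_of_nonneg_left (log_le_sub_one_of_pos (hx i hi)) (hp i hi)

theorem sum_Icc_one_eq_sum_range {M : Type*} [AddCommMonoid M] (f : ℕ → M) (n : ℕ) :
    ∑ y ∈ Icc 1 n, f y = ∑ k ∈ range n, f (k + 1) := by
  rw [range_eq_Ico, sum_Ico_add' f 0 n 1]
  rfl

theorem bernsteinPolynomial_eval_nonneg (m k : ℕ) {x : ℝ} (hx : x ∈ Set.Icc 0 1) :
    0 ≤ (bernsteinPolynomial ℝ m k).eval x := by
  rw [bernsteinPolynomial_eval]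
  have hx₀ := hx.1
  have hx₁ := sub_nonneg.2 hx.2
  positivity

theorem sum_bernsteinPolynomial_eval_mul_log_le (m : ℕ) {x c : ℝ} (hx : x ∈ Set.Icc 0 1)
    (hc : 0 < c) :
    ∑ k ∈ range (m + 1), (bernsteinPolynomial ℝ m k).eval x * log ((k + 1) / c)
      ≤ (m * x + 1) / c - 1 := by
  refine (sum_mul_log_le_sum_mul_sub_sum _ _ _
    (fun k _ => bernsteinPolynomial_eval_nonneg m k hx) fun k _ => by positivity).trans_eq ?_
  have hmean : ∑ k ∈ range (m + 1), (bernsteinPolynomial ℝ m k).eval x * ((k + 1) / c)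
      = (∑ k ∈ range (m + 1), k * (bernsteinPolynomial ℝ m k).eval x
          + ∑ k ∈ range (m + 1), (bernsteinPolynomial ℝ m k).eval x) / c := by
    rw [← sum_add_distrib, sum_div]
    exact sum_congr rfl fun k _ => by ring
  rw [hmean, sum_mul_bernsteinPolynomial_eval, sum_bernsteinPolynomial_eval]

theorem bernoulli_mutual_information_first_term_le_general
    (n : ℕ) (θ : ℝ) (hθ : θ ∈ Set.Ioo (0 : ℝ) 1) :
    θ * ∑ y ∈ Finset.Icc 1 n,
        ((n - 1).choose (y - 1) : ℝ) * θ ^ (y - 1) * (1 - θ) ^ (n - y) *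
          Real.log ((y : ℝ) / ((n : ℝ) * θ))
      ≤ (1 - θ) / (n : ℝ) := by
  obtain ⟨hθ0, hθ1⟩ := hθ
  rcases n with _ | m
  · simp
  simp only [sum_Icc_one_eq_sum_range, Nat.add_sub_cancel, Nat.add_sub_add_right, Nat.cast_add,
    Nat.cast_one, ← bernsteinPolynomial_eval]
  calc θ * ∑ k ∈ range (m + 1),
          (bernsteinPolynomial ℝ m k).eval θ * log ((k + 1) / ((m + 1) * θ))
      ≤ θ * ((m * θ + 1) / ((m + 1) * θ) - 1) := by
        gcongr
        exact sum_bernsteinPolynomial_eval_mul_log_le m ⟨hθ0.le, hθ1.le⟩ (by positivity)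
    _ = (1 - θ) / (m + 1) := by
        field_simp
        ring

/-- For `n ≥ 1` and `θ ∈ (0,1)`,
`θ · Σ_{y=1}^{n} C(n−1, y−1) θ^{y−1} (1−θ)^{n−y} ln(y/(nθ)) ≤ (1−θ)/n`. -/
theorem bernoulli_mutual_information_first_term_le
    (n : ℕ) (hn : 1 ≤ n) (θ : ℝ) (hθ : θ ∈ Set.Ioo (0 : ℝ) 1) :
    θ * ∑ y ∈ Finset.Icc 1 n,
        ((n - 1).choose (y - 1) : ℝ) * θ ^ (y - 1) * (1 - θ) ^ (n - y) *
          Real.log ((y : ℝ) / ((n : ℝ) * θ))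
      ≤ (1 - θ) / (n : ℝ) :=
  bernoulli_mutual_information_first_term_le_general n θ hθ
end

section
/- Let n, d, m be positive integers with 1 ≤ m ≤ d, let C > 0 and σ₀² > 0. For α, β ∈ ℝ and θ ∈ [0,1]^d define R_{C,α,β}(θ) = [4(n²−n)C²α² − 4nCα + 1]·Σ_j θ_j² + [4nC²α² + 4nCαβ − 2β − 4n²C²α² + 2nCα]·Σ_j θ_j + d·[α²σ₀² + (β − nCα)²], and let Θ_m = { θ ∈ [0,1]^d : Σ_j θ_j ≤ m }. Let α° = 1/(2√n·C·(√n+1)) and β° = 1/2 if 2m ≥ d, β° = (1 − 2m/d)·nC·α° + m/d if 2m ≤ d. Then for every (α, β) ∈ ℝ² with 4(n²−n)C²α² − 4nCα + 1 ≤ 0 one has sup_{θ ∈ Θ_m} R_{C,α,β}(θ) ≥ sup_{θ ∈ Θ_m} R_{C,α°,β°}(θ). -/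
/-!
The constant parameter `θ⋆ ≡ ρ`, with `ρ = 1/2` if `2m ≥ d` and `ρ = m/d` otherwise, is a
saddle point. The hypothesis on `α` factors as
`(2√n C(√n+1) α - 1)(2√n C(√n-1) α - 1) ≤ 0`, which forces `α ≥ α°`. At `θ⋆` the risk is
`d (α²σ₀² + 4nC²α²ρ(1-ρ) + (β - nCα - ρ(1 - 2nCα))²)`, increasing in `α²` and, for `α = α°`,
minimised exactly at `β = β°`; so `R_{α°,β°}(θ⋆) ≤ R_{α,β}(θ⋆)`. Conversely the quadratic
coefficient of `R_{α°,β°}` vanishes and its linear coefficient is `(1-2ρ)/(√n+1)²`, so over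
`Θ_m` the risk of `(α°, β°)` is maximal at `θ⋆`.
-/

open Real

/-- The parameter set of the `m`-sparse product Bernoulli model. -/
def sparseParams (d : ℕ) (m : ℕ) : Set (Fin d → ℝ) :=
  {θ | (∀ j, θ j ∈ Set.Icc (0 : ℝ) 1) ∧ ∑ j, θ j ≤ (m : ℝ)}

/-- The exact risk expression `R_{C,α,β}(θ)` for the `m`-sparse Bernoulli model when each
user transmits `C(2u−1)` per coordinate over a Gaussian MAC with noise variance `σ0sq` and
the processor uses the affine estimator `αY + β`. -/
noncomputable def Rrisk (n d : ℕ) (σ0sq C α β : ℝ) (θ : Fin d → ℝ) : ℝ :=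
  (4 * ((n : ℝ) ^ 2 - n) * C ^ 2 * α ^ 2 - 4 * n * C * α + 1) * ∑ j, θ j ^ 2
    + (4 * n * C ^ 2 * α ^ 2 + 4 * n * C * α * β - 2 * β - 4 * (n : ℝ) ^ 2 * C ^ 2 * α ^ 2
        + 2 * n * C * α) * ∑ j, θ j
    + (d : ℝ) * (α ^ 2 * σ0sq + (β - n * C * α) ^ 2)

/-- Worst-case (over `θ ∈ Θ_m`) risk. -/
noncomputable def worstRrisk (n d m : ℕ) (σ0sq C α β : ℝ) : ℝ :=
  sSup (Rrisk n d σ0sq C α β '' sparseParams d m)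

noncomputable def alphaOpt (n : ℕ) (C : ℝ) : ℝ := 1 / (2 * √n * C * (√n + 1))

noncomputable def betaOpt (n : ℕ) (C ρ : ℝ) : ℝ := (1 - 2 * ρ) * n * C * alphaOpt n C + ρ

lemma sqCoeff_eq_mul (n : ℕ) (C α : ℝ) :
    4 * ((n : ℝ) ^ 2 - n) * C ^ 2 * α ^ 2 - 4 * n * C * α + 1
      = (2 * √n * C * (√n + 1) * α - 1) * (2 * √n * C * (√n - 1) * α - 1) := by
  set s := √n
  rw [show (n : ℝ) = s ^ 2 from (sq_sqrt n.cast_nonneg).symm]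
  ring

section Coefficients

variable {n : ℕ} {C : ℝ}

lemma alphaOpt_le_of_sqCoeff_nonpos {α : ℝ} (hn : 0 < n) (hC : 0 < C)
    (hA : 4 * ((n : ℝ) ^ 2 - n) * C ^ 2 * α ^ 2 - 4 * n * C * α + 1 ≤ 0) :
    alphaOpt n C ≤ α := by
  rw [sqCoeff_eq_mul] at hA
  have hs : 1 ≤ √n := one_le_sqrt.mpr (by exact_mod_cast hn)
  have hk : 0 < 2 * √n * C := by positivity
  have hkey : 1 ≤ 2 * √n * C * (√n + 1) * α := by
    by_contra! h
    have h' : 2 * √n * C * (√n - 1) * α - 1 < 0 := by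
      rcases le_total α 0 with hα | hα
      · nlinarith [mul_nonneg hk.le (sub_nonneg.mpr hs)]
      · nlinarith [mul_nonneg hk.le hα]
    exact hA.not_gt (mul_pos_of_neg_of_neg (by linarith) h')
  rw [alphaOpt, div_le_iff₀ (by positivity)]
  linarith

lemma sqCoeff_alphaOpt (hn : 0 < n) (hC : 0 < C) :
    4 * ((n : ℝ) ^ 2 - n) * C ^ 2 * alphaOpt n C ^ 2 - 4 * n * C * alphaOpt n C + 1 = 0 := by
  rw [sqCoeff_eq_mul, alphaOpt]
  have : √n ≠ 0 := (sqrt_pos.mpr (by exact_mod_cast hn)).ne'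
  field_simp
  ring

lemma linCoeff_alphaOpt_betaOpt (hn : 0 < n) (hC : 0 < C) (ρ : ℝ) :
    4 * n * C ^ 2 * alphaOpt n C ^ 2 + 4 * n * C * alphaOpt n C * betaOpt n C ρ
        - 2 * betaOpt n C ρ - 4 * (n : ℝ) ^ 2 * C ^ 2 * alphaOpt n C ^ 2
        + 2 * n * C * alphaOpt n C
      = (1 - 2 * ρ) / (√n + 1) ^ 2 := by
  set s := √n with hs
  have hs0 : s ≠ 0 := (sqrt_pos.mpr (by exact_mod_cast hn)).ne'
  have hs1 : s + 1 ≠ 0 := by positivity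
  have hns : (n : ℝ) = s ^ 2 := (sq_sqrt n.cast_nonneg).symm
  have := hC.ne'
  rw [betaOpt, alphaOpt, ← hs, hns]
  field_simp
  ring

end Coefficients

section Risk

variable {n d m : ℕ} {σ0sq C : ℝ}

lemma const_mem_sparseParams {ρ : ℝ} (hρ0 : 0 ≤ ρ) (hρ1 : ρ ≤ 1) (hρm : d * ρ ≤ m) :
    (fun _ => ρ) ∈ sparseParams d m := by
  simpa [sparseParams, hρ0, hρ1] using hρm

lemma bddAbove_Rrisk_image (α β : ℝ) :
    BddAbove (Rrisk n d σ0sq C α β '' sparseParams d m) := by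
  have hsub : sparseParams d m ⊆ Set.Icc 0 1 := fun θ hθ =>
    ⟨fun j => (hθ.1 j).1, fun j => (hθ.1 j).2⟩
  refine (isCompact_Icc.bddAbove_image ?_).mono (Set.image_mono hsub)
  unfold Rrisk
  fun_prop

lemma worstRrisk_le_of_forall_le {α' β' α β : ℝ} {θ₀ : Fin d → ℝ}
    (h₀ : θ₀ ∈ sparseParams d m)
    (h : ∀ θ ∈ sparseParams d m, Rrisk n d σ0sq C α' β' θ ≤ Rrisk n d σ0sq C α β θ₀) :
    worstRrisk n d m σ0sq C α' β' ≤ worstRrisk n d m σ0sq C α β :=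
  (csSup_le ((Set.nonempty_of_mem h₀).image _) (Set.forall_mem_image.mpr h)).trans
    (le_csSup (bddAbove_Rrisk_image α β) (Set.mem_image_of_mem _ h₀))

lemma Rrisk_const (α β ρ : ℝ) :
    Rrisk n d σ0sq C α β (fun _ => ρ)
      = d * (α ^ 2 * σ0sq + 4 * n * C ^ 2 * α ^ 2 * (ρ * (1 - ρ))
          + (β - n * C * α - ρ * (1 - 2 * n * C * α)) ^ 2) := by
  simp only [Rrisk, Finset.sum_const, Finset.card_univ, Fintype.card_fin, nsmul_eq_mul]
  ring

lemma Rrisk_const_le {α' β' α β ρ : ℝ} (hσ : 0 ≤ σ0sq) (hρ0 : 0 ≤ ρ) (hρ1 : ρ ≤ 1)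
    (hα : α' ^ 2 ≤ α ^ 2) (hβ' : β' = n * C * α' + ρ * (1 - 2 * n * C * α')) :
    Rrisk n d σ0sq C α' β' (fun _ => ρ) ≤ Rrisk n d σ0sq C α β (fun _ => ρ) := by
  rw [Rrisk_const, Rrisk_const, hβ']
  gcongr _ * ?_
  have hρ : 0 ≤ 4 * n * C ^ 2 * (ρ * (1 - ρ)) := by
    have : 0 ≤ 1 - ρ := by linarith
    positivity
  nlinarith [mul_le_mul_of_nonneg_left hα hσ, mul_le_mul_of_nonneg_left hα hρ,
    sq_nonneg (β - n * C * α - ρ * (1 - 2 * n * C * α))]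

lemma Rrisk_alphaOpt_le_const (hn : 0 < n) (hC : 0 < C) {ρ : ℝ} (hρ : ρ ≤ 1 / 2)
    (hcase : 1 - 2 * ρ = 0 ∨ d * ρ = m) {θ : Fin d → ℝ} (hθ : θ ∈ sparseParams d m) :
    Rrisk n d σ0sq C (alphaOpt n C) (betaOpt n C ρ) θ
      ≤ Rrisk n d σ0sq C (alphaOpt n C) (betaOpt n C ρ) (fun _ => ρ) := by
  simp only [Rrisk, sqCoeff_alphaOpt hn hC, linCoeff_alphaOpt_betaOpt hn hC, zero_mul, zero_add,
    Finset.sum_const, Finset.card_univ, Fintype.card_fin, nsmul_eq_mul]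
  gcongr ?_ + _
  rcases hcase with hρ' | hρm
  · simp [hρ']
  · rw [hρm]
    exact mul_le_mul_of_nonneg_left hθ.2 (div_nonneg (by linarith) (by positivity))

lemma worstRrisk_alphaOpt_le (hn : 0 < n) (hC : 0 < C) (hσ : 0 ≤ σ0sq) {ρ α β : ℝ}
    (hρ0 : 0 ≤ ρ) (hρ : ρ ≤ 1 / 2) (hρm : d * ρ ≤ m) (hcase : 1 - 2 * ρ = 0 ∨ d * ρ = m)
    (hA : 4 * ((n : ℝ) ^ 2 - n) * C ^ 2 * α ^ 2 - 4 * n * C * α + 1 ≤ 0) :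
    worstRrisk n d m σ0sq C (alphaOpt n C) (betaOpt n C ρ) ≤ worstRrisk n d m σ0sq C α β := by
  have hα : alphaOpt n C ^ 2 ≤ α ^ 2 :=
    pow_le_pow_left₀ (by unfold alphaOpt; positivity) (alphaOpt_le_of_sqCoeff_nonpos hn hC hA) 2
  refine worstRrisk_le_of_forall_le (const_mem_sparseParams hρ0 (by linarith) hρm) fun θ hθ => ?_
  calc Rrisk n d σ0sq C (alphaOpt n C) (betaOpt n C ρ) θ
      ≤ Rrisk n d σ0sq C (alphaOpt n C) (betaOpt n C ρ) (fun _ => ρ) :=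
        Rrisk_alphaOpt_le_const hn hC hρ hcase hθ
    _ ≤ Rrisk n d σ0sq C α β (fun _ => ρ) :=
        Rrisk_const_le hσ hρ0 (by linarith) hα (by rw [betaOpt]; ring)

end Risk

theorem sparse_bernoulli_opt_nonpos_case_general
    (n d m : ℕ) (hn : 1 ≤ n)
    (C σ0sq : ℝ) (hC : 0 < C) (hσ0 : 0 < σ0sq) :
    (2 * m ≥ d → ∀ αo βo : ℝ,
      αo = 1 / (2 * Real.sqrt n * C * (Real.sqrt n + 1)) →
      βo = 1 / 2 →
      ∀ α β : ℝ, 4 * ((n : ℝ) ^ 2 - n) * C ^ 2 * α ^ 2 - 4 * n * C * α + 1 ≤ 0 →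
        worstRrisk n d m σ0sq C α β ≥ worstRrisk n d m σ0sq C αo βo)
    ∧ (2 * m ≤ d → ∀ αo βo : ℝ,
      αo = 1 / (2 * Real.sqrt n * C * (Real.sqrt n + 1)) →
      βo = (1 - 2 * (m : ℝ) / d) * n * C * αo + (m : ℝ) / d →
      ∀ α β : ℝ, 4 * ((n : ℝ) ^ 2 - n) * C ^ 2 * α ^ 2 - 4 * n * C * α + 1 ≤ 0 →
        worstRrisk n d m σ0sq C α β ≥ worstRrisk n d m σ0sq C αo βo) := by
  refine ⟨fun hdm αo βo hαo hβo α β hA => ?_, fun hdm αo βo hαo hβo α β hA => ?_⟩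
  · have hdm' : (d : ℝ) ≤ 2 * m := by exact_mod_cast hdm
    have hβ : βo = betaOpt n C (1 / 2) := by rw [hβo, betaOpt]; ring
    rw [hαo, hβ]
    exact worstRrisk_alphaOpt_le hn hC hσ0.le (by norm_num) le_rfl (by linarith)
      (Or.inl (by norm_num)) hA
  · have hdm' : 2 * (m : ℝ) ≤ d := by exact_mod_cast hdm
    -- `d = 0` forces `m = 0`, so `d * (m / d) = m` holds despite `m / 0 = 0`.
    have hρm : (d : ℝ) * (m / d) = m :=
      mul_div_cancel_of_imp' fun hd => by rw [hd] at hdm'; linarith [m.cast_nonneg (α := ℝ)]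
    have hβ : βo = betaOpt n C (m / d) := by rw [hβo, hαo, betaOpt, alphaOpt]; ring
    rw [hαo, hβ]
    exact worstRrisk_alphaOpt_le hn hC hσ0.le (by positivity)
      (div_le_of_le_mul₀ (by positivity) (by norm_num) (by linarith)) hρm.le (Or.inr hρm) hA

/-- Lemma 5 / prooflemma2. Any affine estimator with
`4(n²−n)C²α² − 4nCα + 1 ≤ 0` is no better than `(α°, β°)` with
`α° = 1/(2√n·C·(√n+1))`. -/
theorem sparse_bernoulli_opt_nonpos_case
    (n d m : ℕ) (hn : 1 ≤ n) (hm : 1 ≤ m) (hmd : m ≤ d)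
    (C σ0sq : ℝ) (hC : 0 < C) (hσ0 : 0 < σ0sq) :
    (2 * m ≥ d → ∀ αo βo : ℝ,
      αo = 1 / (2 * Real.sqrt n * C * (Real.sqrt n + 1)) →
      βo = 1 / 2 →
      ∀ α β : ℝ, 4 * ((n : ℝ) ^ 2 - n) * C ^ 2 * α ^ 2 - 4 * n * C * α + 1 ≤ 0 →
        worstRrisk n d m σ0sq C α β ≥ worstRrisk n d m σ0sq C αo βo)
    ∧ (2 * m ≤ d → ∀ αo βo : ℝ,
      αo = 1 / (2 * Real.sqrt n * C * (Real.sqrt n + 1)) →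
      βo = (1 - 2 * (m : ℝ) / d) * n * C * αo + (m : ℝ) / d →
      ∀ α β : ℝ, 4 * ((n : ℝ) ^ 2 - n) * C ^ 2 * α ^ 2 - 4 * n * C * α + 1 ≤ 0 →
        worstRrisk n d m σ0sq C α β ≥ worstRrisk n d m σ0sq C αo βo) :=
  sparse_bernoulli_opt_nonpos_case_general n d m hn C σ0sq hC hσ0
end
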